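/- For any parsing of x_1^N into blocks w_1^{(N)},…,w_{c_N}^{(N)} and any m ≥ M ≥ 1, the sum of the blockwise residuals satisfies Σ_{i=1}^{c_N} |J_{ℓ_i,M}(w_i^{(N)})| ≤ Σ_{k=0}^{N−1} ψ_{m,M}(T^k x) + Σ_{i=1}^{c_N} Σ_{k=0}^{m} (log Z_{k+1}(T^{r_{i,k,N}} x) + log Z_M(T^{r_{i,k,N}} x)), where J_{n,M}(w_i^{(N)}) := Σ_{k=0}^{ℓ_i−1} (log Z_{n−k} − log Z_M)(T^{k+L_{i−1}} x) and ψ_{m,M} := sup_{k≥m} |log Z_k − log Z_M|. -/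

import Mathlib

/-
Reversing the order of summation inside the `i`-th block (`k ↦ ℓᵢ - 1 - k`) bounds `|J_{ℓᵢ,M}(wᵢ)|`
by `∑_{k < ℓᵢ} |log Z_{k+1} - log Z_M|` evaluated at `T^{r_{i,k,N}} x`. A term with `k + 1 ≥ m` is
at most `ψ_{m,M}` at its position; a term with `k ≤ m` is at most `log Z_{k+1} + log Z_M`, since
`Z_n ≥ 1` by shift invariance. The `ψ` terms of all blocks together cover `0, …, N - 1` once.

This needs `ψ_{m,M}` to be a genuine supremum, i.e. `sup_n Z_n < ∞` almost surely. That follows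
from the maximal inequality `r · P(sup_n Z_n > r) ≤ |A|`: split `{sup_n Z_n > r}` by the first
letter `a` and the first time `Z` exceeds `r`. The cylinders `[a w]` on which this time is `|a w|`
are disjoint, and on each of them `r · P([a w]) < P([w]) = Q_a([a w])`, where `Q_a` is the image
of `P` under `y ↦ a y`; so for each `a` they carry probability at most `1 / r`.
-/

open MeasureTheory Filter Finset

noncomputable section

variable {A : Type*}

def shift (x : ℕ → A) : ℕ → A := fun n => x (n + 1)

def cyl (x : ℕ → A) (n : ℕ) : Set (ℕ → A) := {y | ∀ i < n, y i = x i}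

variable [MeasurableSpace A]

def Zf (P : Measure (ℕ → A)) (n : ℕ) (x : ℕ → A) : ℝ :=
  (P (cyl (shift x) (n - 1))).toReal / (P (cyl x n)).toReal

def suppP (P : Measure (ℕ → A)) : Set (ℕ → A) := {x | ∀ n, 0 < P (cyl x n)}

def cylW {n : ℕ} (w : Fin n → A) : Set (ℕ → A) := {y | ∀ i : Fin n, y i.val = w i}

def Hn [Fintype A] (P : Measure (ℕ → A)) (n : ℕ) : ℝ :=
  ∑ w : Fin n → A, Real.negMulLog ((P (cylW w)).toReal)

def coordFiltration (A : Type*) [MeasurableSpace A] :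
    Filtration ℕ (MeasurableSpace.pi : MeasurableSpace (ℕ → A)) where
  seq n := MeasurableSpace.comap (fun x : ℕ → A => fun i : Fin (n + 1) => x i) MeasurableSpace.pi
  mono' := by
    intro m n hmn
    have h : (fun x : ℕ → A => fun i : Fin (m + 1) => x i)
        = (fun v : Fin (n + 1) → A => fun i : Fin (m + 1) => v (Fin.castLE (by omega) i))
          ∘ (fun x : ℕ → A => fun i : Fin (n + 1) => x i) := rfl
    show MeasurableSpace.comap _ _ ≤ MeasurableSpace.comap _ _
    rw [h, ← MeasurableSpace.comap_comp]
    exact MeasurableSpace.comap_mono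
      ((measurable_pi_lambda _ (fun i => measurable_pi_apply _)).comap_le)
  le' := by
    intro n
    exact (measurable_pi_lambda _ (fun i => measurable_pi_apply i.val)).comap_le

/-- `log Z_max = sup_{n ≥ 1} log Z_n` -/
def ZmaxLog (P : Measure (ℕ → A)) (x : ℕ → A) : ℝ :=
  ⨆ n : ℕ, Real.log (Zf P (n + 1) x)

/-- `ψ_{m,M} = sup_{k ≥ m} |log Z_k − log Z_M|` -/
def psi (P : Measure (ℕ → A)) (m M : ℕ) (x : ℕ → A) : ℝ :=
  ⨆ k : {k : ℕ // m ≤ k}, |Real.log (Zf P k.val x) - Real.log (Zf P M x)|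

structure Parsing (A : Type*) [MeasurableSpace A] where
  c : ℕ → (ℕ → A) → ℕ
  L : ℕ → (ℕ → A) → ℕ → ℕ
  L_zero : ∀ N x, L N x 0 = 0
  L_last : ∀ N x, L N x (c N x) = N
  L_strict : ∀ N x, ∀ i < c N x, L N x i < L N x (i + 1)
  meas_c : ∀ N, Measurable (c N)
  meas_L : ∀ N i, Measurable fun x => L N x i

/-- probability of the cylinder of the `i`-th parsing block of `x₁^N` -/
def blockP (P : Measure (ℕ → A)) (p : Parsing A) (N : ℕ) (x : ℕ → A) (i : ℕ) : ENNReal :=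
  P (cyl (shift^[p.L N x i] x) (p.L N x (i + 1) - p.L N x i))

/-- `∑ᵢ (− log P([wᵢ^{(N)}]))` -/
def parseSum (P : Measure (ℕ → A)) (p : Parsing A) (N : ℕ) (x : ℕ → A) : ℝ :=
  ∑ i ∈ Finset.range (p.c N x), -Real.log ((blockP P p N x i).toReal)

/-- the reversed index `r_{i,k,N} = L_{i-1,N} + ℓ_{i,N} − 1 − k` (with `i` 0-based). -/
def rIdx (p : Parsing A) (N : ℕ) (x : ℕ → A) (i k : ℕ) : ℕ :=
  p.L N x (i + 1) - 1 - k

/-- blockwise residual `J_{ℓᵢ,M}(wᵢ^{(N)})`. -/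
def Jblock (P : Measure (ℕ → A)) (p : Parsing A) (M N : ℕ) (x : ℕ → A) (i : ℕ) : ℝ :=
  ∑ k ∈ Finset.range (p.L N x (i + 1) - p.L N x i),
    (Real.log (Zf P ((p.L N x (i + 1) - p.L N x i) - k) (shift^[p.L N x i + k] x))
      - Real.log (Zf P M (shift^[p.L N x i + k] x)))

theorem measurableSpace_pi_le_comap_measurableAtom {ι X : Type*} [MeasurableSpace X] :
    (MeasurableSpace.pi : MeasurableSpace (ι → X))
      ≤ MeasurableSpace.comap (fun y i => measurableAtom (y i)) ⊤ := by
  refine iSup_le fun i => ?_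
  rintro _ ⟨s, hs, rfl⟩
  refine ⟨{u | u i ⊆ s}, trivial, ?_⟩
  ext y
  exact ⟨fun h => h (mem_measurableAtom_self _), fun h => measurableAtom_subset hs h⟩

theorem MeasurableSet.mem_of_measurableAtom_eq {ι X : Type*} [MeasurableSpace X]
    {t : Set (ι → X)} (ht : MeasurableSet t) {y y' : ι → X} (hy : y ∈ t)
    (h : ∀ i, measurableAtom (y' i) = measurableAtom (y i)) : y' ∈ t := by
  obtain ⟨S, -, rfl⟩ := measurableSpace_pi_le_comap_measurableAtom t ht
  simpa only [Set.mem_preimage, funext h] using hy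

theorem measurableAtom_eq_iff_mem {X : Type*} [MeasurableSpace X] {x y : X} :
    measurableAtom y = measurableAtom x ↔ y ∈ measurableAtom x :=
  ⟨fun h => h ▸ mem_measurableAtom_self y, measurableAtom_eq_of_mem⟩

theorem measurableSet_setOf_measurableAtom_eq {X : Type*} [MeasurableSpace X] [Countable X]
    (s : Set X) : MeasurableSet {y | measurableAtom y = s} := by
  by_cases h : ∃ x, measurableAtom x = s
  · obtain ⟨x, rfl⟩ := h
    rw [show {y | measurableAtom y = measurableAtom x} = measurableAtom x from
      Set.ext fun _ => measurableAtom_eq_iff_mem]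
    exact MeasurableSet.measurableAtom_of_countable x
  · simp_all

def atomProfile (n : ℕ) (x : ℕ → A) : Fin n → Set A := fun i => measurableAtom (x i)

def atomCyl (x : ℕ → A) (n : ℕ) : Set (ℕ → A) := {y | atomProfile n y = atomProfile n x}

theorem atomProfile_succ (n : ℕ) (x : ℕ → A) :
    atomProfile (n + 1) x = Fin.cons (measurableAtom (x 0)) (atomProfile n (shift x)) := by
  ext i : 1
  induction i using Fin.cases <;> rfl

theorem atomProfile_eq_of_le {m n : ℕ} (hmn : m ≤ n) {x y : ℕ → A}
    (h : atomProfile n x = atomProfile n y) : atomProfile m x = atomProfile m y :=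
  funext fun i => congrFun h (Fin.castLE hmn i)

theorem measurableSet_atomProfile_preimage [Countable A] (n : ℕ) (u : Fin n → Set A) :
    MeasurableSet (atomProfile n ⁻¹' {u}) := by
  have : atomProfile n ⁻¹' {u}
      = ⋂ i : Fin n, (fun y => y i) ⁻¹' {a | measurableAtom a = u i} := by
    ext y
    simp [atomProfile, funext_iff]
  rw [this]
  exact .iInter fun i => measurable_pi_apply _ (measurableSet_setOf_measurableAtom_eq _)

theorem measurableSet_atomCyl [Countable A] (x : ℕ → A) (n : ℕ) : MeasurableSet (atomCyl x n) :=
  measurableSet_atomProfile_preimage n (atomProfile n x)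

/- The σ-algebra on `A` is arbitrary, so `cyl x n` need not be measurable and `P (cyl x n)` is an
outer measure; `atomCyl x n` is its measurable hull. -/
theorem measure_cyl_eq_atomCyl [Countable A] (P : Measure (ℕ → A)) (x : ℕ → A) (n : ℕ) :
    P (cyl x n) = P (atomCyl x n) := by
  refine le_antisymm (measure_mono fun y hy => funext fun i => ?_) ?_
  · simp [atomProfile, hy i i.2]
  rw [← measure_toMeasurable (cyl x n)]
  refine measure_mono fun y hy => ?_
  let z : ℕ → A := fun i => if i < n then x i else y i
  have hz : z ∈ toMeasurable P (cyl x n) :=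
    subset_toMeasurable P _ fun i hi => if_pos hi
  refine (measurableSet_toMeasurable P _).mem_of_measurableAtom_eq hz fun i => ?_
  by_cases hi : i < n
  · simp only [z, if_pos hi]
    exact congrFun hy ⟨i, hi⟩
  · simp [z, hi]

theorem Zf_zero (P : Measure (ℕ → A)) [IsProbabilityMeasure P] (x : ℕ → A) : Zf P 0 x = 1 := by
  simp [Zf, cyl]

theorem Zf_congr [Countable A] (P : Measure (ℕ → A)) {n : ℕ} {x y : ℕ → A}
    (h : atomProfile n x = atomProfile n y) : Zf P n x = Zf P n y := by
  cases n with
  | zero => simp [Zf, cyl]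
  | succ n =>
    have hshift : atomProfile n (shift x) = atomProfile n (shift y) := by
      rw [atomProfile_succ, atomProfile_succ, Fin.cons_inj] at h
      exact h.2
    simp only [Zf, measure_cyl_eq_atomCyl, atomCyl, h, hshift, Nat.add_sub_cancel]

theorem measure_cyl_le_measure_cyl_shift (P : Measure (ℕ → A))
    (hinv : MeasurePreserving shift P P) (x : ℕ → A) (n : ℕ) :
    P (cyl x n) ≤ P (cyl (shift x) (n - 1)) :=
  calc P (cyl x n) ≤ P (shift ⁻¹' cyl (shift x) (n - 1)) :=
        measure_mono fun y hy i hi => hy (i + 1) (by omega)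
    _ ≤ P.map shift (cyl (shift x) (n - 1)) :=
        Measure.le_map_apply hinv.measurable.aemeasurable _
    _ = P (cyl (shift x) (n - 1)) := by rw [hinv.map_eq]

-- Where `P (cyl x n) = 0`, `Zf P n x = 0` by the convention `a / 0 = 0`, and `Real.log 0 = 0`.
theorem log_Zf_nonneg (P : Measure (ℕ → A)) [IsFiniteMeasure P]
    (hinv : MeasurePreserving shift P P) (n : ℕ) (x : ℕ → A) : 0 ≤ Real.log (Zf P n x) := by
  rcases eq_or_ne (P (cyl x n)).toReal 0 with h | h
  · simp [Zf, h]
  · refine Real.log_nonneg ((one_le_div (lt_of_le_of_ne ENNReal.toReal_nonneg h.symm)).2 ?_)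
    exact ENNReal.toReal_mono (measure_ne_top P _) (measure_cyl_le_measure_cyl_shift P hinv x n)

theorem ofReal_mul_measure_cyl_le_of_lt_Zf (P : Measure (ℕ → A))
    {r : ℝ} {n : ℕ} {x : ℕ → A} (h : r < Zf P n x) :
    ENNReal.ofReal r * P (cyl x n) ≤ P (cyl (shift x) (n - 1)) := by
  refine ENNReal.mul_le_of_le_div (ENNReal.ofReal_le_of_le_toReal ?_)
  rw [ENNReal.toReal_div]
  exact h.le

theorem measurableSet_of_preimage_image_eq {X β : Type*} [MeasurableSpace X] [Countable β]
    {f : X → β} (hf : ∀ b, MeasurableSet (f ⁻¹' {b})) {S : Set X} (hS : f ⁻¹' (f '' S) = S) :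
    MeasurableSet S := by
  rw [← hS, ← Set.biUnion_preimage_singleton]
  exact MeasurableSet.biUnion (Set.to_countable _) fun b _ => hf b

theorem measure_le_measure_of_forall_fiber_le {X β : Type*} [MeasurableSpace X] [Finite β]
    {μ ν : Measure X} {f : X → β} (hf : ∀ b, MeasurableSet (f ⁻¹' {b})) {S : Set X}
    (hS : f ⁻¹' (f '' S) = S) (h : ∀ x ∈ S, μ (f ⁻¹' {f x}) ≤ ν (f ⁻¹' {f x})) :
    μ S ≤ ν S := by
  have := Fintype.ofFinite β
  classical
  rw [← hS, ← Set.coe_toFinset (f '' S), ← sum_measure_preimage_singleton _ fun b _ => hf b,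
    ← sum_measure_preimage_singleton _ fun b _ => hf b]
  refine Finset.sum_le_sum fun b hb => ?_
  obtain ⟨x, hx, rfl⟩ := Set.mem_toFinset.1 hb
  exact h x hx

theorem ENNReal.eq_zero_of_forall_natCast_mul_le {a C : ENNReal} (hC : C ≠ ⊤)
    (h : ∀ n : ℕ, (n : ENNReal) * a ≤ C) : a = 0 := by
  by_contra ha
  obtain ⟨n, hn⟩ := ENNReal.exists_nat_gt (ENNReal.div_lt_top hC ha).ne
  rw [ENNReal.div_lt_iff (Or.inl ha) (Or.inr hC)] at hn
  exact (h n).not_gt hn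

def prepend (a : A) (y : ℕ → A) : ℕ → A
  | 0 => a
  | i + 1 => y i

theorem measurable_prepend (a : A) : Measurable (prepend a) :=
  measurable_pi_lambda _ fun i => by
    cases i with
    | zero => exact measurable_const
    | succ i => exact measurable_pi_apply i

theorem preimage_prepend_atomCyl {a : A} {x : ℕ → A}
    (ha : measurableAtom (x 0) = measurableAtom a) (n : ℕ) :
    prepend a ⁻¹' atomCyl x (n + 1) = atomCyl (shift x) n := by
  ext y
  change atomProfile (n + 1) (prepend a y) = _ ↔ _
  rw [atomProfile_succ n x, atomProfile_succ n (prepend a y), ha]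
  exact Fin.cons_inj.trans (and_iff_right rfl)

def firstExceed (P : Measure (ℕ → A)) (r : ℝ) (n : ℕ) : Set (ℕ → A) :=
  {x | r < Zf P (n + 1) x ∧ ∀ j ≤ n, Zf P j x ≤ r}

section Maximal

open Function

variable (P : Measure (ℕ → A)) {r : ℝ}

theorem setOf_exists_lt_Zf_subset_iUnion_firstExceed [IsProbabilityMeasure P] (hr : 1 ≤ r) :
    {x | ∃ n, r < Zf P n x} ⊆ ⋃ n, firstExceed P r n := by
  rintro x ⟨n, hn⟩
  have hex : ∃ k, r < Zf P (k + 1) x := by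
    cases n with
    | zero => rw [Zf_zero] at hn; linarith
    | succ k => exact ⟨k, hn⟩
  refine Set.mem_iUnion.2 ⟨Nat.find hex, Nat.find_spec hex, fun j hj => ?_⟩
  cases j with
  | zero => rw [Zf_zero]; exact hr
  | succ j => exact not_lt.1 (Nat.find_min hex (by omega))

theorem pairwise_disjoint_firstExceed : Pairwise (Disjoint on firstExceed P r) :=
  (pairwise_disjoint_on _).2 fun _ _ hmn =>
    Set.disjoint_left.2 fun _ hm hn => (hm.1.trans_le (hn.2 _ hmn)).false

variable [Finite A]

theorem preimage_image_firstExceed_inter (n : ℕ) (a : A) :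
    atomProfile (n + 1) ⁻¹' (atomProfile (n + 1) ''
        (firstExceed P r n ∩ {x | measurableAtom (x 0) = measurableAtom a}))
      = firstExceed P r n ∩ {x | measurableAtom (x 0) = measurableAtom a} := by
  refine Set.Subset.antisymm ?_ (Set.subset_preimage_image _ _)
  rintro y ⟨x, ⟨⟨hx, hxle⟩, hx0⟩, hxy⟩
  have hZ : ∀ j ≤ n + 1, Zf P j y = Zf P j x := fun j hj =>
    Zf_congr P (atomProfile_eq_of_le hj hxy.symm)
  refine ⟨⟨(hZ _ le_rfl).symm ▸ hx, fun j hj => (hZ j (by omega)).symm ▸ hxle j hj⟩, ?_⟩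
  exact (congrFun hxy 0).symm.trans hx0

theorem ofReal_mul_measure_firstExceed_inter_le (n : ℕ) (a : A) :
    ENNReal.ofReal r * P (firstExceed P r n ∩ {x | measurableAtom (x 0) = measurableAtom a})
      ≤ P.map (prepend a)
          (firstExceed P r n ∩ {x | measurableAtom (x 0) = measurableAtom a}) := by
  refine measure_le_measure_of_forall_fiber_le (μ := ENNReal.ofReal r • P)
    (measurableSet_atomProfile_preimage _) (preimage_image_firstExceed_inter P n a) fun x hx => ?_
  change ENNReal.ofReal r * P (atomCyl x (n + 1)) ≤ P.map (prepend a) (atomCyl x (n + 1))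
  rw [Measure.map_apply (measurable_prepend a) (measurableSet_atomCyl x _),
    preimage_prepend_atomCyl hx.2, ← measure_cyl_eq_atomCyl, ← measure_cyl_eq_atomCyl]
  exact ofReal_mul_measure_cyl_le_of_lt_Zf P hx.1.1

variable [IsProbabilityMeasure P]

theorem ofReal_mul_measure_iUnion_firstExceed_inter_le_one (a : A) :
    ENNReal.ofReal r
        * P (⋃ n, firstExceed P r n ∩ {x | measurableAtom (x 0) = measurableAtom a}) ≤ 1 := by
  set E := fun n => firstExceed P r n ∩ {x | measurableAtom (x 0) = measurableAtom a}
  have hmeas : ∀ n, MeasurableSet (E n) := fun n =>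
    measurableSet_of_preimage_image_eq (measurableSet_atomProfile_preimage _)
      (preimage_image_firstExceed_inter P n a)
  have hdisj : Pairwise (Disjoint on E) := (pairwise_disjoint_firstExceed P).mono
    fun _ _ h => h.mono Set.inter_subset_left Set.inter_subset_left
  have := Measure.isProbabilityMeasure_map (μ := P) (measurable_prepend a).aemeasurable
  calc ENNReal.ofReal r * P (⋃ n, E n) = ∑' n, ENNReal.ofReal r * P (E n) := by
        rw [measure_iUnion hdisj hmeas, ENNReal.tsum_mul_left]
    _ ≤ ∑' n, P.map (prepend a) (E n) :=
        ENNReal.tsum_le_tsum fun n => ofReal_mul_measure_firstExceed_inter_le P n a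
    _ = P.map (prepend a) (⋃ n, E n) := (measure_iUnion hdisj hmeas).symm
    _ ≤ 1 := prob_le_one

theorem ofReal_mul_measure_setOf_exists_lt_Zf_le (hr : 1 ≤ r) :
    ENNReal.ofReal r * P {x | ∃ n, r < Zf P n x} ≤ Nat.card A := by
  have := Fintype.ofFinite A
  set E := fun a : A => ⋃ n, firstExceed P r n ∩ {x | measurableAtom (x 0) = measurableAtom a}
  have hcover : {x | ∃ n, r < Zf P n x} ⊆ ⋃ a, E a := fun x hx =>
    have ⟨n, hn⟩ := Set.mem_iUnion.1 (setOf_exists_lt_Zf_subset_iUnion_firstExceed P hr hx)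
    Set.mem_iUnion₂.2 ⟨x 0, n, hn, rfl⟩
  calc ENNReal.ofReal r * P {x | ∃ n, r < Zf P n x} ≤ ENNReal.ofReal r * ∑ a, P (E a) := by
        gcongr
        exact (measure_mono hcover).trans (measure_iUnion_fintype_le P E)
    _ = ∑ a, ENNReal.ofReal r * P (E a) := Finset.mul_sum _ _ _
    _ ≤ ∑ _a : A, 1 :=
        Finset.sum_le_sum fun a _ => ofReal_mul_measure_iUnion_firstExceed_inter_le_one P a
    _ = Nat.card A := by simp

end Maximal

theorem ae_bddAbove_Zf [Finite A] (P : Measure (ℕ → A)) [IsProbabilityMeasure P] :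
    ∀ᵐ x ∂P, BddAbove (Set.range fun n => Zf P n x) := by
  refine ae_iff.2 <| ENNReal.eq_zero_of_forall_natCast_mul_le
    (ENNReal.natCast_ne_top (Nat.card A)) fun n => ?_
  calc (n : ENNReal) * P {x | ¬BddAbove (Set.range fun n => Zf P n x)}
      ≤ ENNReal.ofReal (n + 1) * P {x | ∃ k, (n + 1 : ℝ) < Zf P k x} := by
        gcongr
        · rw [← ENNReal.ofReal_natCast]
          exact ENNReal.ofReal_le_ofReal (by linarith)
        · intro hx
          obtain ⟨_, ⟨k, rfl⟩, hk⟩ := not_bddAbove_iff.1 hx (n + 1)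
          exact ⟨k, hk⟩
    _ ≤ Nat.card A :=
        ofReal_mul_measure_setOf_exists_lt_Zf_le P (le_add_of_nonneg_left n.cast_nonneg)

theorem ae_forall_bddAbove_Zf_iterate [Finite A] (P : Measure (ℕ → A)) [IsProbabilityMeasure P]
    (hinv : MeasurePreserving shift P P) :
    ∀ᵐ x ∂P, ∀ j, BddAbove (Set.range fun n => Zf P n (shift^[j] x)) :=
  ae_all_iff.2 fun j => (hinv.iterate j).quasiMeasurePreserving.ae (ae_bddAbove_Zf P)

-- `psi` is a real `iSup`, hence `0` when unbounded: boundedness of `Z_n` makes it a supremum.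
theorem abs_log_Zf_sub_le_psi (P : Measure (ℕ → A)) [IsFiniteMeasure P]
    (hinv : MeasurePreserving shift P P) {y : ℕ → A}
    (hy : BddAbove (Set.range fun n => Zf P n y)) {m M k : ℕ} (hk : m ≤ k) :
    |Real.log (Zf P k y) - Real.log (Zf P M y)| ≤ psi P m M y := by
  obtain ⟨B, hB⟩ := hy
  refine le_ciSup (f := fun k : {k // m ≤ k} => |Real.log (Zf P k y) - Real.log (Zf P M y)|)
    ⟨B + Real.log (Zf P M y), ?_⟩ ⟨k, hk⟩
  rintro _ ⟨⟨k, -⟩, rfl⟩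
  have hk0 := log_Zf_nonneg P hinv k y
  have hM0 := log_Zf_nonneg P hinv M y
  have hkB : Real.log (Zf P k y) ≤ B :=
    (Real.log_le_self (by unfold Zf; positivity)).trans (hB ⟨k, rfl⟩)
  exact abs_sub_le_iff.2 ⟨by linarith, by linarith⟩

theorem abs_sum_sub_le_sum_add_sum (F : ℕ → ℕ → ℝ) (ψ : ℕ → ℝ) (m M a b : ℕ)
    (hF : ∀ n j, 0 ≤ F n j) (hψ : ∀ n j, m ≤ n → |F n j - F M j| ≤ ψ j) :
    |∑ k ∈ range (b - a), (F (b - a - k) (a + k) - F M (a + k))|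
      ≤ ∑ k ∈ range (b - a), ψ (a + k)
        + ∑ k ∈ range (m + 1), (F (k + 1) (b - 1 - k) + F M (b - 1 - k)) := by
  set G : ℕ → ℝ := fun k => F (k + 1) (b - 1 - k) + F M (b - 1 - k)
  have hpoint : ∀ k, |F (k + 1) (b - 1 - k) - F M (b - 1 - k)|
      ≤ ψ (b - 1 - k) + if k ∈ range (m + 1) then G k else 0 := by
    intro k
    have hψ0 : 0 ≤ ψ (b - 1 - k) := (abs_nonneg _).trans (hψ m _ le_rfl)
    split_ifs with hk
    · have := hF (k + 1) (b - 1 - k)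
      have := hF M (b - 1 - k)
      exact le_add_of_nonneg_of_le hψ0 (abs_sub_le_iff.2 ⟨by linarith, by linarith⟩)
    · rw [add_zero]
      exact hψ _ _ (by rw [mem_range] at hk; omega)
  calc |∑ k ∈ range (b - a), (F (b - a - k) (a + k) - F M (a + k))|
      ≤ ∑ k ∈ range (b - a), |F (b - a - k) (a + k) - F M (a + k)| := abs_sum_le_sum_abs _ _
    _ = ∑ k ∈ range (b - a), |F (k + 1) (b - 1 - k) - F M (b - 1 - k)| := by
        rw [← sum_range_reflect]
        refine sum_congr rfl fun k hk => ?_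
        have hk := mem_range.1 hk
        rw [show b - a - (b - a - 1 - k) = k + 1 by omega,
          show a + (b - a - 1 - k) = b - 1 - k by omega]
    _ ≤ ∑ k ∈ range (b - a), (ψ (b - 1 - k) + if k ∈ range (m + 1) then G k else 0) :=
        sum_le_sum fun k _ => hpoint k
    _ = ∑ k ∈ range (b - a), ψ (a + k) + ∑ k ∈ range (b - a) ∩ range (m + 1), G k := by
        rw [sum_add_distrib, sum_ite_mem, ← sum_range_reflect (fun k => ψ (a + k))]
        congr 1
        refine sum_congr rfl fun k hk => ?_
        have hk := mem_range.1 hk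
        rw [show a + (b - a - 1 - k) = b - 1 - k by omega]
    _ ≤ ∑ k ∈ range (b - a), ψ (a + k) + ∑ k ∈ range (m + 1), G k := by
        gcongr
        · exact fun k _ _ => add_nonneg (hF _ _) (hF _ _)
        · exact inter_subset_right

theorem sum_range_sum_range_sub_eq {M : Type*} [AddCommMonoid M] (f : ℕ → M) (L : ℕ → ℕ)
    (c : ℕ) (hL0 : L 0 = 0) (hL : ∀ i < c, L i ≤ L (i + 1)) :
    ∑ i ∈ range c, ∑ k ∈ range (L (i + 1) - L i), f (L i + k) = ∑ j ∈ range (L c), f j := by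
  induction c with
  | zero => simp [hL0]
  | succ c ih =>
    rw [sum_range_succ, ih fun i hi => hL i (by omega), ← sum_range_add,
      Nat.add_sub_cancel' (hL c (by omega))]

theorem stmt14_general [Fintype A] (P : Measure (ℕ → A)) [IsProbabilityMeasure P]
    (hinv : MeasurePreserving (shift : (ℕ → A) → (ℕ → A)) P P)
    (p : Parsing A) (m M : ℕ) :
    ∀ᵐ x ∂P, ∀ N : ℕ,
      ∑ i ∈ Finset.range (p.c N x), |Jblock P p M N x i|
        ≤ ∑ k ∈ Finset.range N, psi P m M (shift^[k] x)
          + ∑ i ∈ Finset.range (p.c N x), ∑ k ∈ Finset.range (m + 1),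
              (Real.log (Zf P (k + 1) (shift^[rIdx p N x i k] x))
                + Real.log (Zf P M (shift^[rIdx p N x i k] x))) := by
  filter_upwards [ae_forall_bddAbove_Zf_iterate P hinv] with x hx N
  calc ∑ i ∈ range (p.c N x), |Jblock P p M N x i|
      ≤ ∑ i ∈ range (p.c N x), (∑ k ∈ range (p.L N x (i + 1) - p.L N x i),
            psi P m M (shift^[p.L N x i + k] x)
          + ∑ k ∈ range (m + 1), (Real.log (Zf P (k + 1) (shift^[rIdx p N x i k] x))
                + Real.log (Zf P M (shift^[rIdx p N x i k] x)))) :=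
        sum_le_sum fun i _ => abs_sum_sub_le_sum_add_sum
          (fun n j => Real.log (Zf P n (shift^[j] x))) (fun j => psi P m M (shift^[j] x)) m M _ _
          (fun n j => log_Zf_nonneg P hinv n _) fun n j hn => abs_log_Zf_sub_le_psi P hinv (hx j) hn
    _ = _ := by
        rw [sum_add_distrib, sum_range_sum_range_sub_eq (fun j => psi P m M (shift^[j] x)) _ _
          (p.L_zero N x) fun i hi => (p.L_strict N x i hi).le, p.L_last]

theorem stmt14 [Fintype A] (P : Measure (ℕ → A)) [IsProbabilityMeasure P]
    (hinv : MeasurePreserving (shift : (ℕ → A) → (ℕ → A)) P P)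
    (p : Parsing A) (m M : ℕ) (hM : 1 ≤ M) (hm : M ≤ m) :
    ∀ᵐ x ∂P, ∀ N : ℕ,
      ∑ i ∈ Finset.range (p.c N x), |Jblock P p M N x i|
        ≤ ∑ k ∈ Finset.range N, psi P m M (shift^[k] x)
          + ∑ i ∈ Finset.range (p.c N x), ∑ k ∈ Finset.range (m + 1),
              (Real.log (Zf P (k + 1) (shift^[rIdx p N x i k] x))
                + Real.log (Zf P M (shift^[rIdx p N x i k] x))) :=
  stmt14_general P hinv p m M
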